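/- N(Γ₀(3)) = 2: the set of cosets P·SL₂(ℤ) in SL₂(ℝ)/SL₂(ℤ) such that P⁻¹·A·P has integer entries for every A ∈ Γ₀(3) has exactly 2 elements. -/

import Mathlib

open Matrix MatrixGroups CongruenceSubgroup

/-- A real 2×2 matrix has integer entries. -/
def IsIntegerMatrix (M : Matrix (Fin 2) (Fin 2) ℝ) : Prop :=
  ∀ i j, ∃ k : ℤ, M i j = (k : ℝ)

/-- The embedding `SL(2, ℤ) →* SL(2, ℝ)`. -/
noncomputable def toSL2R : SL(2, ℤ) →* SL(2, ℝ) :=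
  Matrix.SpecialLinearGroup.map (Int.castRingHom ℝ)

/-- `SL(2, ℤ)` as a subgroup of `SL(2, ℝ)`. -/
noncomputable def SL2ZinR : Subgroup SL(2, ℝ) := toSL2R.range

/-- The set of cosets `P·SL₂(ℤ)` in `SL₂(ℝ)/SL₂(ℤ)` such that `P⁻¹·A·P` has integer
entries for every `A ∈ G`; its cardinality is `N(G)`. -/
noncomputable def goodCosets (G : Subgroup SL(2, ℤ)) : Set (SL(2, ℝ) ⧸ SL2ZinR) :=
  {x | ∃ P : SL(2, ℝ), x = QuotientGroup.mk P ∧ ∀ A ∈ G,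
    IsIntegerMatrix ((P⁻¹ * toSL2R A * P : SL(2, ℝ)) : Matrix (Fin 2) (Fin 2) ℝ)}

/-!
Write `P = [[p, q], [r, s]]`. Conjugating the transvections `[[1, 1], [0, 1]]` and
`[[1, 0], [3, 1]]` of `Γ₀(3)` by `P` shows that `r², rs, s²` and `3p², 3pq, 3q²` are integers.
Then `r / s` is rational (or `s = 0`), so a right translate of `P` by `SL₂(ℤ)`, which changes
neither the coset nor the integrality condition, has `r = 0`. Now `ps = 1` and `s² · 3p² = 3`
force `p² = 1` or `p² = 1/3`, and in both cases `q / p` is an integer, i.e.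
`P = diag(p, p⁻¹) · [[1, q / p], [0, 1]]`. So the coset is that of `1` or of
`diag(1/√3, √3)`; both qualify, and they differ because `√3` is irrational.
-/

open Matrix.SpecialLinearGroup (diag2 diag2_coe' transvection_coe)

def ConjIntegral (G : Subgroup SL(2, ℤ)) (P : SL(2, ℝ)) : Prop :=
  ∀ A ∈ G, IsIntegerMatrix ((P⁻¹ * toSL2R A * P : SL(2, ℝ)) : Matrix (Fin 2) (Fin 2) ℝ)

lemma det_fin_two_eq_one {R : Type*} [CommRing R] (P : SL(2, R)) :
    P 0 0 * P 1 1 - P 0 1 * P 1 0 = 1 := by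
  rw [← Matrix.det_fin_two]
  exact P.det_coe

lemma toSL2R_apply (B : SL(2, ℤ)) (i j : Fin 2) : toSL2R B i j = (B i j : ℝ) := rfl

lemma coe_toSL2R (B : SL(2, ℤ)) : (toSL2R B : Matrix (Fin 2) (Fin 2) ℝ) = B.1.map (↑) := rfl

lemma IsIntegerMatrix.mul {M N : Matrix (Fin 2) (Fin 2) ℝ} (hM : IsIntegerMatrix M)
    (hN : IsIntegerMatrix N) : IsIntegerMatrix (M * N) := by
  intro i j
  obtain ⟨a₀, ha₀⟩ := hM i 0
  obtain ⟨a₁, ha₁⟩ := hM i 1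
  obtain ⟨b₀, hb₀⟩ := hN 0 j
  obtain ⟨b₁, hb₁⟩ := hN 1 j
  exact ⟨a₀ * b₀ + a₁ * b₁, by simp [Matrix.mul_apply, ha₀, ha₁, hb₀, hb₁]⟩

lemma isIntegerMatrix_toSL2R (B : SL(2, ℤ)) : IsIntegerMatrix (toSL2R B) :=
  fun i j => ⟨B i j, toSL2R_apply B i j⟩

lemma conjIntegral_one (G : Subgroup SL(2, ℤ)) : ConjIntegral G 1 := fun A _ => by
  simpa using isIntegerMatrix_toSL2R A

lemma ConjIntegral.mul_toSL2R {G : Subgroup SL(2, ℤ)} {P : SL(2, ℝ)} (hP : ConjIntegral G P)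
    (B : SL(2, ℤ)) : ConjIntegral G (P * toSL2R B) := by
  intro A hA
  have : (P * toSL2R B)⁻¹ * toSL2R A * (P * toSL2R B) =
      toSL2R B⁻¹ * (P⁻¹ * toSL2R A * P) * toSL2R B := by
    simp only [map_inv]
    group
  rw [this, Matrix.SpecialLinearGroup.coe_mul, Matrix.SpecialLinearGroup.coe_mul]
  exact ((isIntegerMatrix_toSL2R _).mul (hP A hA)).mul (isIntegerMatrix_toSL2R _)

lemma mk_mul_toSL2R (P : SL(2, ℝ)) (B : SL(2, ℤ)) :
    (QuotientGroup.mk (P * toSL2R B) : SL(2, ℝ) ⧸ SL2ZinR) = QuotientGroup.mk P :=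
  QuotientGroup.eq.mpr ⟨B⁻¹, by simp⟩

lemma transvection_zero_one_mem_Gamma0 (N : ℕ) (b : ℤ) :
    SpecialLinearGroup.transvection zero_ne_one b ∈ Gamma0 N := by
  simp [Gamma0_mem, transvection_coe]

lemma transvection_one_zero_mem_Gamma0 (N : ℕ) :
    SpecialLinearGroup.transvection one_ne_zero (N : ℤ) ∈ Gamma0 N := by
  simp [Gamma0_mem, transvection_coe]

lemma coe_conj_transvection_zero_one (P : SL(2, ℝ)) (b : ℤ) :
    ((P⁻¹ * toSL2R (SpecialLinearGroup.transvection zero_ne_one b) * P : SL(2, ℝ)) :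
      Matrix (Fin 2) (Fin 2) ℝ) =
      !![1 + b * (P 1 0 * P 1 1), b * P 1 1 ^ 2; -(b * P 1 0 ^ 2), 1 - b * (P 1 0 * P 1 1)] := by
  have hdet := det_fin_two_eq_one P
  ext i j
  fin_cases i <;> fin_cases j <;>
    simp [Matrix.SpecialLinearGroup.coe_inv, Matrix.adjugate_fin_two, coe_toSL2R,
      transvection_coe, Matrix.mul_apply, Fin.sum_univ_two, Matrix.vecMul, dotProduct,
      Matrix.one_apply, Matrix.single_apply] <;>
    linarith

lemma coe_conj_transvection_one_zero (P : SL(2, ℝ)) (c : ℤ) :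
    ((P⁻¹ * toSL2R (SpecialLinearGroup.transvection one_ne_zero c) * P : SL(2, ℝ)) :
      Matrix (Fin 2) (Fin 2) ℝ) =
      !![1 - c * (P 0 0 * P 0 1), -(c * P 0 1 ^ 2); c * P 0 0 ^ 2, 1 + c * (P 0 0 * P 0 1)] := by
  have hdet := det_fin_two_eq_one P
  ext i j
  fin_cases i <;> fin_cases j <;>
    simp [Matrix.SpecialLinearGroup.coe_inv, Matrix.adjugate_fin_two, coe_toSL2R,
      transvection_coe, Matrix.mul_apply, Fin.sum_univ_two, Matrix.vecMul, dotProduct,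
      Matrix.one_apply, Matrix.single_apply] <;>
    linarith

lemma ConjIntegral.bottom_row_products_int {G : Subgroup SL(2, ℤ)} {P : SL(2, ℝ)}
    (hP : ConjIntegral G P) {b : ℤ} (hb : SpecialLinearGroup.transvection zero_ne_one b ∈ G) :
    (∃ n : ℤ, b * P 1 0 ^ 2 = n) ∧ (∃ k : ℤ, b * (P 1 0 * P 1 1) = k) ∧
      (∃ m : ℤ, b * P 1 1 ^ 2 = m) := by
  have h := hP _ hb
  rw [coe_conj_transvection_zero_one] at h
  obtain ⟨n, hn⟩ : ∃ n : ℤ, -(b * P 1 0 ^ 2) = n := h 1 0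
  obtain ⟨k, hk⟩ : ∃ k : ℤ, 1 + b * (P 1 0 * P 1 1) = k := h 0 0
  exact ⟨⟨-n, by push_cast; linarith⟩, ⟨k - 1, by push_cast; linarith⟩, h 0 1⟩

lemma ConjIntegral.top_row_products_int {G : Subgroup SL(2, ℤ)} {P : SL(2, ℝ)}
    (hP : ConjIntegral G P) {c : ℤ} (hc : SpecialLinearGroup.transvection one_ne_zero c ∈ G) :
    (∃ a : ℤ, c * P 0 0 ^ 2 = a) ∧ (∃ k : ℤ, c * (P 0 0 * P 0 1) = k) ∧
      (∃ l : ℤ, c * P 0 1 ^ 2 = l) := by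
  have h := hP _ hc
  rw [coe_conj_transvection_one_zero] at h
  obtain ⟨k, hk⟩ : ∃ k : ℤ, 1 + c * (P 0 0 * P 0 1) = k := h 1 1
  obtain ⟨l, hl⟩ : ∃ l : ℤ, -(c * P 0 1 ^ 2) = l := h 0 1
  exact ⟨h 1 0, ⟨k - 1, by push_cast; linarith⟩, ⟨-l, by push_cast; linarith⟩⟩

lemma exists_SL2Z_apply_zero_zero_apply_one_zero {a b : ℤ} (h : IsCoprime a b) :
    ∃ B : SL(2, ℤ), B 0 0 = a ∧ B 1 0 = b := by
  obtain ⟨u, v, huv⟩ := h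
  exact ⟨⟨!![a, -v; b, u], by rw [Matrix.det_fin_two_of]; linear_combination huv⟩, rfl, rfl⟩

lemma exists_mul_toSL2R_apply_one_zero_eq_zero {P : SL(2, ℝ)} {n k : ℤ} (hn : P 1 0 ^ 2 = n)
    (hk : P 1 0 * P 1 1 = k) : ∃ B : SL(2, ℤ), (P * toSL2R B) 1 0 = 0 := by
  by_cases hr : P 1 0 = 0
  · exact ⟨1, by simpa using hr⟩
  set q : ℚ := k / n
  have hq : P 1 1 = P 1 0 * q := by
    have : (n : ℝ) ≠ 0 := by rw [← hn]; positivity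
    rw [Rat.cast_div, Rat.cast_intCast, Rat.cast_intCast, ← hn, ← hk]
    field_simp
  have hden : (q : ℝ) * q.den = q.num := by exact_mod_cast Rat.mul_den_eq_num q
  obtain ⟨B, hB₀, hB₁⟩ :=
    exists_SL2Z_apply_zero_zero_apply_one_zero (Rat.isCoprime_num_den q).neg_right
  refine ⟨B, ?_⟩
  rw [Matrix.SpecialLinearGroup.coe_mul, Matrix.mul_apply, Fin.sum_univ_two, toSL2R_apply,
    toSL2R_apply, hB₀, hB₁, hq]
  push_cast
  linear_combination (-P 1 0) * hden

lemma eq_diag2_mul_T_zpow {P : SL(2, ℝ)} {a : ℝ} (ha : a ≠ 0) (h00 : P 0 0 = a)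
    (h10 : P 1 0 = 0) {j : ℤ} (h01 : P 0 1 = a * j) :
    P = diag2 a ha * toSL2R (ModularGroup.T ^ j) := by
  have h11 : P 1 1 = a⁻¹ := by
    have hdet := det_fin_two_eq_one P
    rw [h00, h10, mul_zero, sub_zero] at hdet
    exact eq_inv_of_mul_eq_one_right hdet
  ext i k
  rw [Matrix.SpecialLinearGroup.coe_mul, coe_toSL2R, ModularGroup.coe_T_zpow, diag2_coe']
  fin_cases i <;> fin_cases k <;> simp [Matrix.mul_apply, Fin.sum_univ_two, h00, h10, h01, h11]

lemma diag2_one : diag2 (1 : ℝ) one_ne_zero = 1 := by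
  ext i k
  fin_cases i <;> fin_cases k <;> simp [diag2_coe']

lemma diag2_neg {a : ℝ} (ha : a ≠ 0) :
    diag2 (-a) (neg_ne_zero.mpr ha) = diag2 a ha * toSL2R (-1) := by
  ext i k
  fin_cases i <;> fin_cases k <;> simp [diag2_coe', toSL2R]

lemma mk_diag2_eq_of_sq_eq {a b : ℝ} (ha : a ≠ 0) (hb : b ≠ 0) (h : a ^ 2 = b ^ 2) :
    (QuotientGroup.mk (diag2 a ha) : SL(2, ℝ) ⧸ SL2ZinR) = QuotientGroup.mk (diag2 b hb) := by
  obtain rfl | rfl := sq_eq_sq_iff_eq_or_eq_neg.mp h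
  · rfl
  · rw [diag2_neg hb, mk_mul_toSL2R]

lemma coe_conj_diag2 {a : ℝ} (ha : a ≠ 0) (A : SL(2, ℤ)) :
    (((diag2 a ha)⁻¹ * toSL2R A * diag2 a ha : SL(2, ℝ)) : Matrix (Fin 2) (Fin 2) ℝ) =
      !![(A 0 0 : ℝ), A 0 1 / a ^ 2; a ^ 2 * A 1 0, A 1 1] := by
  ext i j
  fin_cases i <;> fin_cases j <;>
    simp [Matrix.SpecialLinearGroup.coe_inv, Matrix.adjugate_fin_two, diag2_coe', coe_toSL2R,
      Matrix.mul_apply, Fin.sum_univ_two, Matrix.vecMul, dotProduct] <;>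
    field_simp

noncomputable def sqrtDiag (N : ℕ) [NeZero N] : SL(2, ℝ) :=
  diag2 (√N)⁻¹ (by simp [NeZero.ne N])

lemma conjIntegral_Gamma0_sqrtDiag (N : ℕ) [NeZero N] :
    ConjIntegral (Gamma0 N) (sqrtDiag N) := by
  intro A hA
  obtain ⟨c, hc⟩ := (ZMod.intCast_zmod_eq_zero_iff_dvd _ N).mp (Gamma0_mem.mp hA)
  have hN : ((√N)⁻¹ : ℝ) ^ 2 = (N : ℝ)⁻¹ := by rw [inv_pow, Real.sq_sqrt (Nat.cast_nonneg N)]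
  have hN0 : (N : ℝ) ≠ 0 := Nat.cast_ne_zero.mpr (NeZero.ne N)
  rw [sqrtDiag, coe_conj_diag2, hN, hc]
  intro i j
  fin_cases i <;> fin_cases j
  · exact ⟨A 0 0, rfl⟩
  · exact ⟨N * A 0 1, by simp [div_inv_eq_mul, mul_comm]⟩
  · exact ⟨c, by simp [hN0]⟩
  · exact ⟨A 1 1, rfl⟩

lemma mk_one_ne_mk_sqrtDiag_three :
    (QuotientGroup.mk 1 : SL(2, ℝ) ⧸ SL2ZinR) ≠ QuotientGroup.mk (sqrtDiag 3) := by
  rw [ne_eq, QuotientGroup.eq, inv_one, one_mul]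
  rintro ⟨B, hB⟩
  have h11 : (B 1 1 : ℝ) = √3 := by
    simpa [toSL2R_apply, sqrtDiag, diag2_coe'] using congr($hB 1 1)
  exact Nat.prime_three.irrational_sqrt ⟨B 1 1, by exact_mod_cast h11⟩

lemma sq_eq_one_or_three_mul_sq_eq_one {p s : ℝ} {m a : ℤ} (hps : p * s = 1) (hm : s ^ 2 = m)
    (ha : 3 * p ^ 2 = a) : p ^ 2 = 1 ∨ 3 * p ^ 2 = 1 := by
  have hma : m * a = 3 := by
    have : (m * a : ℝ) = 3 := by
      rw [← hm, ← ha]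
      linear_combination (3 * (p * s) + 3) * hps
    exact_mod_cast this
  have ha_pos : 0 < a := by
    have : (0 : ℝ) < a := by rw [← ha]; positivity [left_ne_zero_of_mul_eq_one hps]
    exact_mod_cast this
  have ha_le : a ≤ 3 := Int.le_of_dvd (by norm_num) ⟨m, by linarith⟩
  interval_cases a
  · exact Or.inr (by exact_mod_cast ha)
  · omega
  · exact Or.inl (by linear_combination ha / 3)

lemma ConjIntegral.mk_eq_of_apply_one_zero_eq_zero {P : SL(2, ℝ)}
    (hP : ConjIntegral (Gamma0 3) P) (h10 : P 1 0 = 0) :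
    (QuotientGroup.mk P : SL(2, ℝ) ⧸ SL2ZinR) = QuotientGroup.mk 1 ∨
      (QuotientGroup.mk P : SL(2, ℝ) ⧸ SL2ZinR) = QuotientGroup.mk (sqrtDiag 3) := by
  obtain ⟨-, -, ⟨m, hm⟩⟩ := hP.bottom_row_products_int (transvection_zero_one_mem_Gamma0 3 1)
  obtain ⟨⟨a, ha⟩, ⟨k, hk⟩, ⟨l, hl⟩⟩ := hP.top_row_products_int (transvection_one_zero_mem_Gamma0 3)
  simp only [Int.cast_one, one_mul] at hm
  push_cast at ha hk hl
  have hps : P 0 0 * P 1 1 = 1 := by simpa [h10] using det_fin_two_eq_one P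
  have hp : P 0 0 ≠ 0 := left_ne_zero_of_mul_eq_one hps
  rcases sq_eq_one_or_three_mul_sq_eq_one hps hm ha with hp1 | hp3
  · obtain ⟨j, rfl⟩ : (3 : ℤ) ∣ k := by
      refine Int.prime_three.dvd_of_dvd_pow (n := 2) ⟨l, ?_⟩
      have : ((k ^ 2 : ℤ) : ℝ) = 3 * l := by
        push_cast
        linear_combination (-(3 * (P 0 0 * P 0 1)) - k) * hk + 9 * P 0 1 ^ 2 * hp1 + 3 * hl
      exact_mod_cast this
    push_cast at hk
    left
    rw [eq_diag2_mul_T_zpow hp rfl h10 (j := j)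
        (by linear_combination P 0 0 / 3 * hk - P 0 1 * hp1),
      mk_mul_toSL2R, mk_diag2_eq_of_sq_eq hp one_ne_zero (by rw [hp1, one_pow]), diag2_one]
  · right
    rw [sqrtDiag, eq_diag2_mul_T_zpow hp rfl h10 (j := k)
        (by linear_combination P 0 0 * hk - P 0 1 * hp3), mk_mul_toSL2R]
    refine mk_diag2_eq_of_sq_eq hp _ ?_
    rw [inv_pow, Real.sq_sqrt (by norm_num)]
    linear_combination hp3 / 3

lemma ConjIntegral.mk_eq_one_or_sqrtDiag {P : SL(2, ℝ)} (hP : ConjIntegral (Gamma0 3) P) :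
    (QuotientGroup.mk P : SL(2, ℝ) ⧸ SL2ZinR) = QuotientGroup.mk 1 ∨
      (QuotientGroup.mk P : SL(2, ℝ) ⧸ SL2ZinR) = QuotientGroup.mk (sqrtDiag 3) := by
  obtain ⟨⟨n, hn⟩, ⟨k, hk⟩, -⟩ := hP.bottom_row_products_int (transvection_zero_one_mem_Gamma0 3 1)
  simp only [Int.cast_one, one_mul] at hn hk
  obtain ⟨B, hB⟩ := exists_mul_toSL2R_apply_one_zero_eq_zero hn hk
  rw [← mk_mul_toSL2R P B]
  exact (hP.mul_toSL2R B).mk_eq_of_apply_one_zero_eq_zero hB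

/-- `N(Γ₀(3)) = 2`. -/
theorem stmt_14 : (goodCosets (Gamma0 3)).ncard = 2 := by
  have hcosets :
      goodCosets (Gamma0 3) = {QuotientGroup.mk 1, QuotientGroup.mk (sqrtDiag 3)} := by
    ext x
    constructor
    · rintro ⟨P, rfl, hP⟩
      exact ConjIntegral.mk_eq_one_or_sqrtDiag hP
    · rintro (rfl | rfl)
      exacts [⟨1, rfl, conjIntegral_one _⟩, ⟨_, rfl, conjIntegral_Gamma0_sqrtDiag 3⟩]
  rw [hcosets, Set.ncard_pair mk_one_ne_mk_sqrtDiag_three]
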